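/- arXiv:1405.7276 — 4 statements merged into one kernel-verified Lean document; each statement's English description precedes it below -/
import Mathlib

section
/- The random directed multigraph WCM_N (each of N vertices independently sends directed edges to two uniformly chosen vertices, with replacement) is equal in distribution to the directed configuration model DCM_N(d^-, d^+) where d_i^+ = 2 for all i and the in-degree vector d^- = (Y_1,…,Y_N) is multinomially distributed with 2N trials and success probability 1/N per category, i.e., for every directed multigraph G with out-degrees all 2, P(WCM_N = G) = E[P(DCM_N((Y_i)_i, 2) = G)]. -/
open Finset

def permCompEquiv {α β : Type*} [DecidableEq β]
    (f g : α → β) :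
    {σ : Equiv.Perm α // ∀ a, g (σ a) = f a} ≃ (∀ j, {a // f a = j} ≃ {a // g a = j}) where
  toFun σ j := Equiv.subtypeEquiv σ.1 (fun a => by rw [σ.2 a])
  invFun F := ⟨(Equiv.sigmaFiberEquiv f).symm.trans ((Equiv.sigmaCongrRight F).trans
      (Equiv.sigmaFiberEquiv g)), fun a => ((F (f a)) ⟨a, rfl⟩).2⟩
  left_inv σ := by
    ext a
    simp [Equiv.sigmaFiberEquiv, Equiv.sigmaCongrRight]
  right_inv F := by
    funext j
    ext ⟨a, ha⟩
    subst ha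
    simp [Equiv.sigmaFiberEquiv, Equiv.sigmaCongrRight, Equiv.subtypeEquiv]

lemma card_perm_comp {α β : Type*} [Fintype α] [DecidableEq α] [Fintype β] [DecidableEq β]
    (f g : α → β) (h : ∀ j, (univ.filter (fun a => f a = j)).card
      = (univ.filter (fun a => g a = j)).card) :
    (univ.filter (fun σ : Equiv.Perm α => ∀ a, g (σ a) = f a)).card
      = ∏ j, Nat.factorial ((univ.filter (fun a => g a = j)).card) := by
  rw [← Fintype.card_subtype]
  rw [Fintype.card_congr (permCompEquiv f g), Fintype.card_pi]
  refine Finset.prod_congr rfl fun j _ => ?_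
  have hc : Fintype.card {a // f a = j} = Fintype.card {a // g a = j} := by
    simp only [Fintype.card_subtype]; exact h j
  rw [Fintype.card_equiv (Fintype.equivOfCardEq hc), hc, Fintype.card_subtype]

lemma card_filter_pair {α : Type*} [DecidableEq α] (a b : α) (hab : a ≠ b)
    (p : α → Prop) [DecidablePred p] :
    (({a, b} : Finset α).filter p).card
      = (if p a then 1 else 0) + (if p b then 1 else 0) := by
  rw [filter_insert, filter_singleton]
  split_ifs <;> simp_all [Finset.card_insert_of_notMem]

/-- `WCM_N` is equal in distribution to the directed configuration model
with constant out-degree `2` and multinomial `Mult(2N, 1/N)` in-degree vector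
`d⁻ = (Y_1, …, Y_N)`: for every directed multigraph `G = (x i j)` with all out-degrees `2`,
`P(WCM_N = G) = E[P(DCM_N((Y_i)_i, 2) = G)]`.  Since the configuration-model probability
vanishes unless the in-degree vector equals the in-degree sequence `dminus` of `G`, the
expectation on the right-hand side collapses to
`P(Y = dminus) ⋅ P(DCM_N(dminus, 2) = G)`, where `P(Y = dminus)` is the multinomial
probability `(2N)! / (∏ i, dminus i !) ⋅ (1/N)^{2N}`. -/
theorem wcm_eq_randomized_dcm (N : ℕ) (hN : 1 ≤ N)
    (x : Fin N → Fin N → ℕ) (hout2 : ∀ i, ∑ j, x i j = 2)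
    (dminus : Fin N → ℕ) (hdm : ∀ i, dminus i = ∑ j, x j i)
    (vout vin : Fin (2 * N) → Fin N)
    (hout : ∀ i, (Finset.univ.filter (fun a => vout a = i)).card = 2)
    (hin : ∀ i, (Finset.univ.filter (fun a => vin a = i)).card = dminus i) :
    -- P(WCM_N = G)
    ((Finset.univ.filter (fun u : Fin N → Fin N × Fin N =>
        ∀ i j, ((if (u i).1 = j then 1 else 0) + (if (u i).2 = j then 1 else 0) : ℕ)
          = x i j)).card : ℝ) / (N : ℝ) ^ (2 * N)
    =
    -- P(Y = dminus), the multinomial weight of the in-degree sequence of G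
    ((Nat.factorial (2 * N) : ℝ) / (∏ i, Nat.factorial (dminus i))
        * ((1 : ℝ) / N) ^ (2 * N))
    *
    -- P(DCM_N(dminus, 2) = G), the configuration-model probability
    (((Finset.univ.filter (fun σ : Equiv.Perm (Fin (2 * N)) =>
        ∀ i j, (Finset.univ.filter
          (fun a => vout a = i ∧ vin (σ a) = j)).card = x i j)).card : ℝ)
      / (Nat.factorial (2 * N) : ℝ)) := by
  set Su := (Finset.univ.filter (fun u : Fin N → Fin N × Fin N =>
        ∀ i j, ((if (u i).1 = j then 1 else 0) + (if (u i).2 = j then 1 else 0) : ℕ)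
          = x i j)) with hSu
  set Sf := (Finset.univ.filter (fun f : Fin (2 * N) → Fin N =>
        ∀ i j, (Finset.univ.filter (fun a => vout a = i ∧ f a = j)).card = x i j)) with hSf
  set S2 := (Finset.univ.filter (fun σ : Equiv.Perm (Fin (2 * N)) =>
        ∀ i j, (Finset.univ.filter
          (fun a => vout a = i ∧ vin (σ a) = j)).card = x i j)) with hS2
  -- the two out-half-edges of each vertex
  have hne : ∀ i, (univ.filter (fun a => vout a = i)).Nonempty := fun i =>
    Finset.card_pos.mp (by rw [hout i]; norm_num)
  set A : Fin N → Fin (2 * N) := fun i => (univ.filter (fun a => vout a = i)).min' (hne i)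
    with hA
  set B : Fin N → Fin (2 * N) := fun i => (univ.filter (fun a => vout a = i)).max' (hne i)
    with hB
  have hAv : ∀ i, vout (A i) = i := fun i =>
    (mem_filter.mp ((univ.filter (fun a => vout a = i)).min'_mem (hne i))).2
  have hBv : ∀ i, vout (B i) = i := fun i =>
    (mem_filter.mp ((univ.filter (fun a => vout a = i)).max'_mem (hne i))).2
  have hAB : ∀ i, A i ≠ B i := fun i =>
    ne_of_lt (Finset.min'_lt_max'_of_card _ (by rw [hout i]; norm_num))
  have hpair : ∀ i, (univ.filter (fun a => vout a = i)) = {A i, B i} := by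
    intro i
    refine (Finset.eq_of_subset_of_card_le ?_ ?_).symm
    · intro a ha
      rcases Finset.mem_insert.mp ha with h | h
      · subst h; exact (univ.filter (fun a => vout a = i)).min'_mem (hne i)
      · rw [Finset.mem_singleton.mp h]
        exact (univ.filter (fun a => vout a = i)).max'_mem (hne i)
    · rw [hout i, Finset.card_insert_of_notMem (by simp [hAB i]), Finset.card_singleton]
  -- key counting identity for functions
  have key : ∀ (h : Fin (2 * N) → Fin N) (i j : Fin N),
      (univ.filter (fun a => vout a = i ∧ h a = j)).card
        = (if h (A i) = j then 1 else 0) + (if h (B i) = j then 1 else 0) := by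
    intro h i j
    have : (univ.filter (fun a => vout a = i ∧ h a = j))
        = (univ.filter (fun a => vout a = i)).filter (fun a => h a = j) := by
      rw [Finset.filter_filter]
    rw [this, hpair i, card_filter_pair _ _ (hAB i)]
  -- Step A : Su.card = Sf.card
  have stepA : Su.card = Sf.card := by
    refine Finset.card_bij'
      (fun u _ => fun a => if a = A (vout a) then (u (vout a)).1 else (u (vout a)).2)
      (fun f _ => fun i => (f (A i), f (B i))) ?_ ?_ ?_ ?_
    · intro u hu
      rw [hSf, mem_filter]
      refine ⟨mem_univ _, fun i j => ?_⟩
      beta_reduce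
      rw [key]
      have h1 : (if A i = A (vout (A i)) then (u (vout (A i))).1 else (u (vout (A i))).2)
          = (u i).1 := by rw [hAv i]; simp
      have h2 : (if B i = A (vout (B i)) then (u (vout (B i))).1 else (u (vout (B i))).2)
          = (u i).2 := by rw [hBv i]; simp [(hAB i).symm]
      rw [h1, h2]
      exact (mem_filter.mp hu).2 i j
    · intro f hf
      rw [hSu, mem_filter]
      refine ⟨mem_univ _, fun i j => ?_⟩
      have := (mem_filter.mp hf).2 i j
      rw [key] at this
      exact this
    · intro u hu
      funext i
      beta_reduce
      have h1 : (if A i = A (vout (A i)) then (u (vout (A i))).1 else (u (vout (A i))).2)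
          = (u i).1 := by rw [hAv i]; simp
      have h2 : (if B i = A (vout (B i)) then (u (vout (B i))).1 else (u (vout (B i))).2)
          = (u i).2 := by rw [hBv i]; simp [(hAB i).symm]
      rw [h1, h2]
    · intro f hf
      funext a
      beta_reduce
      have ha : a ∈ (univ.filter (fun b => vout b = vout a)) := by simp
      rw [hpair (vout a)] at ha
      by_cases hc : a = A (vout a)
      · rw [if_pos hc, ← hc]
      · rw [if_neg hc]
        rcases Finset.mem_insert.mp ha with h | h
        · exact absurd h hc
        · rw [← Finset.mem_singleton.mp h]
  -- fibers of f ∈ Sf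
  have hfib : ∀ f ∈ Sf, ∀ j, (univ.filter (fun a => f a = j)).card = dminus j := by
    intro f hf j
    rw [hdm j]
    rw [Finset.card_eq_sum_card_fiberwise (f := vout) (t := univ) (fun a _ => mem_univ _)]
    refine Finset.sum_congr rfl fun i _ => ?_
    rw [← (mem_filter.mp hf).2 i j, Finset.filter_filter]
    congr 1
    ext a
    simp [and_comm]
  -- Step B : S2.card = Sf.card * ∏ j, (dminus j)!
  have stepB : S2.card = Sf.card * ∏ j, Nat.factorial (dminus j) := by
    have hmap : ∀ σ ∈ S2, (fun a => vin (σ a)) ∈ Sf := by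
      intro σ hσ
      rw [hSf, mem_filter]
      exact ⟨mem_univ _, (mem_filter.mp hσ).2⟩
    rw [Finset.card_eq_sum_card_fiberwise hmap]
    have hterm : ∀ f ∈ Sf, (S2.filter (fun σ => (fun a => vin (σ a)) = f)).card
        = ∏ j, Nat.factorial (dminus j) := by
      intro f hf
      have heq : S2.filter (fun σ => (fun a => vin (σ a)) = f)
          = univ.filter (fun σ : Equiv.Perm (Fin (2 * N)) => ∀ a, vin (σ a) = f a) := by
        ext σ
        simp only [Finset.mem_filter, funext_iff]
        constructor
        · rintro ⟨_, h⟩; exact ⟨mem_univ _, h⟩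
        · rintro ⟨_, h⟩
          refine ⟨?_, h⟩
          rw [hS2, mem_filter]
          refine ⟨mem_univ _, fun i j => ?_⟩
          rw [← (mem_filter.mp hf).2 i j]
          congr 1
          ext a
          simp [h a]
      calc (S2.filter (fun σ => (fun a => vin (σ a)) = f)).card
          = (univ.filter (fun σ : Equiv.Perm (Fin (2 * N)) =>
              ∀ a, vin (σ a) = f a)).card := by rw [heq]
        _ = ∏ j, Nat.factorial ((univ.filter (fun a => vin a = j)).card) := by
            have h2 := card_perm_comp f vin (fun j => by rw [hfib f hf j, hin j])
            convert h2 using 2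
            exact Finset.ext (fun σ => by simp only [Finset.mem_filter])
        _ = ∏ j, Nat.factorial (dminus j) :=
            Finset.prod_congr rfl fun j _ => by rw [hin j]
    rw [Finset.sum_congr rfl hterm, Finset.sum_const, smul_eq_mul]
  -- arithmetic conclusion
  rw [stepA, stepB]
  have hNne : (N : ℝ) ≠ 0 := by positivity
  have hfacne : ((2 * N).factorial : ℝ) ≠ 0 := by positivity
  have hprodne : ((∏ i, Nat.factorial (dminus i) : ℕ) : ℝ) ≠ 0 := by
    simp [Nat.cast_ne_zero, Finset.prod_eq_zero_iff, Nat.factorial_ne_zero]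
  push_cast
  generalize (Sf.card : ℝ) = s
  field_simp
  rw [mul_assoc, ← mul_pow, mul_one_div_cancel hNne, one_pow, mul_one]
end

section
/- Let B_k^N = P(Bin(2N, 1/N) = k) and let P_k^2 = e^{-2} 2^k / k! be the Poisson(2) probabilities. Then for any constant C > 0, Σ_{k=0}^∞ e^{Ck} |B_k^N − P_k^2| → 0 as N → ∞ (setting B_k^N = 0 for k > 2N). -/
/-- The probability `P(Bin(2N, 1/N) = k)`, extended by `0` for `k > 2N`. -/
noncomputable def binProb (N k : ℕ) : ℝ :=
  if k ≤ 2 * N then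
    (Nat.choose (2 * N) k : ℝ) * ((1 : ℝ) / N) ^ k * (1 - (1 : ℝ) / N) ^ (2 * N - k)
  else 0

/-- The Poisson(2) probability `P_k^2 = e^{-2} 2^k / k!`. -/
noncomputable def poisson2 (k : ℕ) : ℝ := Real.exp (-2) * 2 ^ k / (Nat.factorial k : ℝ)

open Filter Topology Finset

lemma cast_descFactorial_eq_prod {k n : ℕ} (h : k ≤ n) :
    ((Nat.descFactorial n k : ℕ) : ℝ) = ∏ i ∈ Finset.range k, ((n : ℝ) - i) := by
  induction k with
  | zero => simp
  | succ k ih =>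
      rw [Nat.descFactorial_succ, Finset.prod_range_succ, Nat.cast_mul,
        ih (le_trans (Nat.le_succ k) h), Nat.cast_sub (le_trans (Nat.le_succ k) h)]
      ring

lemma cast_choose_eq (k n : ℕ) :
    ((Nat.choose n k : ℕ) : ℝ) = (Nat.descFactorial n k : ℝ) / (Nat.factorial k : ℝ) := by
  rw [Nat.descFactorial_eq_factorial_mul_choose, Nat.cast_mul]
  field_simp

lemma one_sub_inv_nonneg (N : ℕ) : (0 : ℝ) ≤ 1 - 1 / (N : ℝ) := by
  rcases Nat.eq_zero_or_pos N with h | h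
  · simp [h]
  · have : (1 : ℝ) / N ≤ 1 := by
      rw [div_le_one (by exact_mod_cast h)]
      exact_mod_cast h
    linarith

lemma binProb_nonneg (N k : ℕ) : 0 ≤ binProb N k := by
  unfold binProb
  split
  · have h1 := one_sub_inv_nonneg N
    positivity
  · exact le_refl 0

lemma binProb_le (N k : ℕ) : binProb N k ≤ 2 ^ k / (Nat.factorial k : ℝ) := by
  unfold binProb
  split
  · rename_i hk
    rcases Nat.eq_zero_or_pos N with hN | hN
    · subst hN
      obtain rfl : k = 0 := by omega
      norm_num
    have hN0 : (0 : ℝ) < N := by exact_mod_cast hN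
    have h1 : (1 - 1 / (N : ℝ)) ^ (2 * N - k) ≤ 1 :=
      pow_le_one₀ (one_sub_inv_nonneg N) (by
        have : (0 : ℝ) ≤ 1 / (N : ℝ) := by positivity
        linarith)
    have h2 : (Nat.choose (2 * N) k : ℝ) * ((1 : ℝ) / N) ^ k ≤
        2 ^ k / (Nat.factorial k : ℝ) := by
      have hd : (Nat.choose (2 * N) k : ℝ) ≤ ((2 * N : ℕ) : ℝ) ^ k / (Nat.factorial k : ℝ) := by
        rw [cast_choose_eq]
        apply div_le_div_of_nonneg_right ?_ (by positivity)
        · exact_mod_cast Nat.descFactorial_le_pow (2 * N) k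
      calc (Nat.choose (2 * N) k : ℝ) * ((1 : ℝ) / N) ^ k
          ≤ (((2 * N : ℕ) : ℝ) ^ k / (Nat.factorial k : ℝ)) * ((1 : ℝ) / N) ^ k := by
            apply mul_le_mul_of_nonneg_right hd (by positivity)
        _ = 2 ^ k / (Nat.factorial k : ℝ) := by
            push_cast
            rw [div_mul_eq_mul_div, ← mul_pow]
            congr 2
            field_simp
    have hnn : (0 : ℝ) ≤ (Nat.choose (2 * N) k : ℝ) * ((1 : ℝ) / N) ^ k := by positivity
    calc (Nat.choose (2 * N) k : ℝ) * ((1 : ℝ) / N) ^ k * (1 - (1 : ℝ) / N) ^ (2 * N - k)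
        ≤ (Nat.choose (2 * N) k : ℝ) * ((1 : ℝ) / N) ^ k * 1 :=
          mul_le_mul_of_nonneg_left h1 hnn
      _ = (Nat.choose (2 * N) k : ℝ) * ((1 : ℝ) / N) ^ k := mul_one _
      _ ≤ _ := h2
  · positivity

lemma poisson2_nonneg (k : ℕ) : 0 ≤ poisson2 k := by
  unfold poisson2; positivity

lemma poisson2_le (k : ℕ) : poisson2 k ≤ 2 ^ k / (Nat.factorial k : ℝ) := by
  unfold poisson2
  apply div_le_div_of_nonneg_right ?_ (by positivity)
  have h : Real.exp (-2) ≤ 1 := Real.exp_le_one_iff.mpr (by norm_num)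
  nlinarith [pow_pos (show (0:ℝ) < 2 by norm_num) k]

lemma binProb_tendsto (k : ℕ) :
    Filter.Tendsto (fun N : ℕ => binProb N k) Filter.atTop (nhds (poisson2 k)) := by
  -- the product part tends to 2^k
  have h1 : Filter.Tendsto (fun N : ℕ => ∏ i ∈ Finset.range k, (2 - (i : ℝ) / N))
      Filter.atTop (nhds (2 ^ k)) := by
    have : (2 : ℝ) ^ k = ∏ _i ∈ Finset.range k, (2 : ℝ) := by simp
    rw [this]
    apply tendsto_finset_prod
    intro i _
    have hi : Filter.Tendsto (fun N : ℕ => (i : ℝ) / N) Filter.atTop (nhds 0) := by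
      simpa [div_eq_mul_inv] using tendsto_one_div_atTop_nhds_zero_nat.const_mul (i : ℝ)
    simpa using (tendsto_const_nhds (x := (2:ℝ))).sub hi
  -- (1 - 1/N)^(2N) → exp (-2)
  have h2 : Filter.Tendsto (fun N : ℕ => (1 - 1 / (N : ℝ)) ^ (2 * N))
      Filter.atTop (nhds (Real.exp (-2))) := by
    have hcomp : Filter.Tendsto (fun N : ℕ => (1 + (-2 : ℝ) / (2 * N : ℕ)) ^ (2 * N : ℕ))
        Filter.atTop (nhds (Real.exp (-2))) := by
      exact (Real.tendsto_one_add_div_pow_exp (-2)).comp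
        (Filter.tendsto_atTop_mono (f := id) (g := fun n => 2 * n)
          (fun n => by show n ≤ 2 * n; omega) Filter.tendsto_id)
    apply hcomp.congr'
    filter_upwards [Filter.eventually_ge_atTop 1] with N hN
    have hN0 : (N : ℝ) ≠ 0 := by positivity
    congr 1
    push_cast
    field_simp
    ring
  -- (1 - 1/N)^k → 1
  have h3 : Filter.Tendsto (fun N : ℕ => (1 - 1 / (N : ℝ)) ^ k)
      Filter.atTop (nhds 1) := by
    have : Filter.Tendsto (fun N : ℕ => 1 - 1 / (N : ℝ)) Filter.atTop (nhds 1) := by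
      simpa using (tendsto_const_nhds (x := (1:ℝ))).sub tendsto_one_div_atTop_nhds_zero_nat
    simpa using this.pow k
  have hmain : Filter.Tendsto
      (fun N : ℕ => (1 / (Nat.factorial k : ℝ)) * (∏ i ∈ Finset.range k, (2 - (i : ℝ) / N)) *
        ((1 - 1 / (N : ℝ)) ^ (2 * N) / (1 - 1 / (N : ℝ)) ^ k))
      Filter.atTop
      (nhds ((1 / (Nat.factorial k : ℝ)) * 2 ^ k * (Real.exp (-2) / 1))) :=
    ((h1.const_mul _).mul (h2.div h3 one_ne_zero))
  have hval : (1 / (Nat.factorial k : ℝ)) * 2 ^ k * (Real.exp (-2) / 1) = poisson2 k := by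
    unfold poisson2; field_simp
  rw [← hval]
  apply hmain.congr'
  filter_upwards [Filter.eventually_ge_atTop (k + 2)] with N hN
  have hN2 : 2 ≤ N := by omega
  have hkN : k ≤ 2 * N := by omega
  have hN0 : (0 : ℝ) < N := by exact_mod_cast (by omega : 0 < N)
  have hlt : (1 : ℝ) / N < 1 := by
    rw [div_lt_one hN0]
    exact_mod_cast (by omega : 1 < N)
  have hne : (1 : ℝ) - 1 / N ≠ 0 := by linarith
  unfold binProb
  rw [if_pos hkN]
  rw [cast_choose_eq, cast_descFactorial_eq_prod hkN]
  rw [pow_sub₀ _ hne hkN]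
  have hprod : (∏ i ∈ Finset.range k, (((2 * N : ℕ) : ℝ) - i)) * ((1 : ℝ) / N) ^ k
      = ∏ i ∈ Finset.range k, (2 - (i : ℝ) / N) := by
    rw [show ((1:ℝ)/N) ^ k = ∏ _i ∈ Finset.range k, (1:ℝ)/N by
        rw [Finset.prod_const, Finset.card_range], ← Finset.prod_mul_distrib]
    apply Finset.prod_congr rfl
    intro i _
    push_cast
    field_simp
  rw [← hprod]
  ring


/-- Exponentially weighted Poisson limit theorem:
for every `C > 0`, `∑_{k} e^{Ck} |B_k^N − P_k^2| → 0` as `N → ∞`. -/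
theorem weighted_poisson_approx (C : ℝ) (hC : 0 < C) :
    Filter.Tendsto
      (fun N : ℕ => ∑' k : ℕ, Real.exp (C * k) * |binProb N k - poisson2 k|)
      Filter.atTop (nhds 0) := by
  have hzero : (0 : ℝ) = ∑' k : ℕ, Real.exp (C * k) * |poisson2 k - poisson2 k| := by
    simp
  rw [hzero]
  apply tendsto_tsum_of_dominated_convergence
    (bound := fun k : ℕ => (2 * Real.exp C) ^ k / (Nat.factorial k : ℝ))
  · exact Real.summable_pow_div_factorial (2 * Real.exp C)
  · intro k
    have := (binProb_tendsto k).sub (tendsto_const_nhds (x := poisson2 k))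
    have habs := (this.abs).const_mul (Real.exp (C * k))
    simpa using habs
  · filter_upwards with N k
    have hb := binProb_le N k
    have hp := poisson2_le k
    have hb0 := binProb_nonneg N k
    have hp0 := poisson2_nonneg k
    have habs : |binProb N k - poisson2 k| ≤ 2 ^ k / (Nat.factorial k : ℝ) := by
      rw [abs_sub_le_iff]
      constructor <;> linarith
    have hexp : Real.exp (C * k) = (Real.exp C) ^ k := by
      rw [← Real.exp_nat_mul, mul_comm]
    rw [Real.norm_eq_abs, abs_of_nonneg (by positivity)]
    calc Real.exp (C * k) * |binProb N k - poisson2 k|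
        ≤ Real.exp (C * k) * (2 ^ k / (Nat.factorial k : ℝ)) :=
          mul_le_mul_of_nonneg_left habs (Real.exp_pos _).le
      _ = (2 * Real.exp C) ^ k / (Nat.factorial k : ℝ) := by
          rw [hexp, mul_pow]
          ring
end

section
/- (Otter–Dwass formula, used case) Let T be the total progeny of a Galton–Watson process started from one individual with offspring distribution μ on ℕ. Then for every n ≥ 1, P(T = n) = (1/n) P(S_n = n − 1), where S_n is the sum of n i.i.d. random variables each with law μ. -/
open scoped ENNReal

/-- Partial sum `S_m = x_0 + ⋯ + x_{m-1}` of the offspring numbers. -/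
def offspringSum {n : ℕ} (x : Fin n → ℕ) (m : ℕ) : ℕ :=
  ∑ i ∈ Finset.univ.filter (fun i : Fin n => (i : ℕ) < m), x i

namespace OtterDwassAux

variable {n : ℕ}

def idx (hn : 0 < n) (j : ℕ) : Fin n := ⟨j % n, Nat.mod_lt _ hn⟩

lemma idx_fin (hn : 0 < n) (i : Fin n) : idx hn (i : ℕ) = i := by
  simp [idx, Nat.mod_eq_of_lt i.isLt]

lemma idx_add_n (hn : 0 < n) (j : ℕ) : idx hn (j + n) = idx hn j := by
  simp [idx, Nat.add_mod_right]

def rot (k : Fin n) (x : Fin n → ℕ) : Fin n → ℕ := fun i => x (i + k)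

lemma sum_rot (hn : 0 < n) (k : Fin n) (x : Fin n → ℕ) : ∑ i, rot k x i = ∑ i, x i :=
  haveI : NeZero n := ⟨hn.ne'⟩
  Fintype.sum_equiv (Equiv.addRight k) _ _ (fun _ => rfl)

lemma offspringSum_univ (y : Fin n → ℕ) : offspringSum y n = ∑ i, y i := by
  unfold offspringSum
  rw [Finset.filter_true_of_mem (fun i _ => i.isLt)]

lemma offspringSum_range (hn : 0 < n) (x : Fin n → ℕ) {m : ℕ} (hm : m ≤ n) :
    offspringSum x m = ∑ j ∈ Finset.range m, x (idx hn j) := by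
  unfold offspringSum
  have h1 : Finset.range m = (Finset.range n).filter (fun j => j < m) := by
    ext j; simp only [Finset.mem_filter, Finset.mem_range]; omega
  calc ∑ i ∈ Finset.univ.filter (fun i : Fin n => (i : ℕ) < m), x i
      = ∑ i : Fin n, if (i : ℕ) < m then x i else 0 := Finset.sum_filter _ _
    _ = ∑ i : Fin n, (fun j => if j < m then x (idx hn j) else 0) ((i : ℕ)) :=
        Finset.sum_congr rfl (fun i _ => by simp [idx_fin hn i])
    _ = ∑ j ∈ Finset.range n, (fun j => if j < m then x (idx hn j) else 0) j :=
        Fin.sum_univ_eq_sum_range (fun j => if j < m then x (idx hn j) else 0) n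
    _ = ∑ j ∈ (Finset.range n).filter (fun j => j < m), x (idx hn j) :=
        (Finset.sum_filter _ _).symm
    _ = ∑ j ∈ Finset.range m, x (idx hn j) := by rw [← h1]

def walk (hn : 0 < n) (x : Fin n → ℕ) (m : ℕ) : ℤ :=
  ∑ j ∈ Finset.range m, ((x (idx hn j) : ℤ) - 1)

lemma walk_succ (hn : 0 < n) (x : Fin n → ℕ) (m : ℕ) :
    walk hn x (m + 1) = walk hn x m + ((x (idx hn m) : ℤ) - 1) :=
  Finset.sum_range_succ _ _

lemma sum_range_idx (hn : 0 < n) (x : Fin n → ℕ) :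
    ∑ j ∈ Finset.range n, x (idx hn j) = ∑ i, x i := by
  rw [← Fin.sum_univ_eq_sum_range (fun j => x (idx hn j)) n]
  exact Finset.sum_congr rfl (fun i _ => by rw [idx_fin hn i])

lemma walk_add_n (hn : 0 < n) (x : Fin n → ℕ) (hs : ∑ i, x i = n - 1) (m : ℕ) :
    walk hn x (m + n) = walk hn x m - 1 := by
  induction m with
  | zero =>
    have h0 : walk hn x 0 = 0 := by simp [walk]
    have h1 : walk hn x n = (∑ j ∈ Finset.range n, (x (idx hn j) : ℤ)) - n := by
      unfold walk
      rw [Finset.sum_sub_distrib, Finset.sum_const, Finset.card_range]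
      ring
    have h2 : (∑ j ∈ Finset.range n, (x (idx hn j) : ℤ)) = ((n : ℤ) - 1) := by
      rw [← Nat.cast_sum]
      rw [sum_range_idx hn x, hs]
      omega
    rw [zero_add, h0, h1, h2]; ring
  | succ m ih =>
    have : m + 1 + n = (m + n) + 1 := by omega
    rw [this, walk_succ, walk_succ, ih, idx_add_n]
    ring

lemma cycle (hn : 0 < n) (x : Fin n → ℕ) (hs : ∑ i, x i = n - 1) :
    ∃! k : ℕ, k < n ∧ ∀ m, 1 ≤ m → m < n → walk hn x k ≤ walk hn x (k + m) := by
  classical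
  have hper := walk_add_n hn x hs
  set S := walk hn x with hS
  obtain ⟨b, hb, hbmin⟩ := Finset.exists_min_image (Finset.range n) S ⟨0, Finset.mem_range.mpr hn⟩
  have hAne : ((Finset.range n).filter (fun m => ∀ m' ∈ Finset.range n, S m ≤ S m')).Nonempty :=
    ⟨b, Finset.mem_filter.mpr ⟨hb, hbmin⟩⟩
  obtain ⟨hkn, hkmin⟩ := Finset.mem_filter.mp
    (Finset.min'_mem _ hAne)
  set k := ((Finset.range n).filter (fun m => ∀ m' ∈ Finset.range n, S m ≤ S m')).min' hAne with hk
  rw [Finset.mem_range] at hkn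
  have hklt : ∀ m, m < k → S k < S m := by
    intro m hm
    have hmn : m < n := hm.trans hkn
    have hmA : m ∉ (Finset.range n).filter (fun m => ∀ m' ∈ Finset.range n, S m ≤ S m') :=
      fun hmA => absurd (Finset.min'_le _ m hmA) (by omega)
    rw [Finset.mem_filter] at hmA
    push_neg at hmA
    obtain ⟨m', hm', hlt⟩ := hmA (Finset.mem_range.mpr hmn)
    exact lt_of_le_of_lt (hkmin m' hm') hlt
  have hgood : ∀ m, 1 ≤ m → m < n → S k ≤ S (k + m) := by
    intro m h1 h2
    by_cases hc : k + m < n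
    · exact hkmin _ (Finset.mem_range.mpr hc)
    · push_neg at hc
      have he : k + m = (k + m - n) + n := by omega
      have hlt : k + m - n < k := by omega
      have h3 := hklt _ hlt
      rw [he, hper]
      linarith
  have habs : ∀ a b : ℕ, a < b → b < n → (∀ m, 1 ≤ m → m < n → S a ≤ S (a + m)) →
      (∀ m, 1 ≤ m → m < n → S b ≤ S (b + m)) → False := by
    intro a b hab hbn hga hgb
    have h1 := hga (b - a) (by omega) (by omega)
    rw [show a + (b - a) = b by omega] at h1
    have h2 := hgb (a + n - b) (by omega) (by omega)
    rw [show b + (a + n - b) = a + n by omega] at h2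
    have h3 := hper a
    linarith
  refine ⟨k, ⟨hkn, hgood⟩, ?_⟩
  rintro k' ⟨hk'n, hg'⟩
  rcases lt_trichotomy k' k with h | h | h
  · exact (habs k' k h hkn hg' hgood).elim
  · exact h
  · exact (habs k k' h hk'n hgood hg').elim

lemma offspringSum_rot_cast (hn : 0 < n) (x : Fin n → ℕ) (k : Fin n) {m : ℕ} (hm : m ≤ n) :
    (offspringSum (rot k x) m : ℤ)
      = walk hn x ((k : ℕ) + m) - walk hn x (k : ℕ) + m := by
  have hrw : ∀ j, j < m → rot k x (idx hn j) = x (idx hn ((k : ℕ) + j)) := by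
    intro j hj
    show x (idx hn j + k) = _
    congr 1
    apply Fin.ext
    show (j % n + (k : ℕ)) % n = ((k : ℕ) + j) % n
    rw [Nat.mod_add_mod, Nat.add_comm]
  have hsplit : walk hn x ((k : ℕ) + m) - walk hn x (k : ℕ)
      = ∑ j ∈ Finset.range m, ((x (idx hn ((k : ℕ) + j)) : ℤ) - 1) := by
    unfold walk
    rw [Finset.range_eq_Ico, ← Finset.sum_Ico_consecutive _ (Nat.zero_le (k : ℕ)) (Nat.le_add_right _ m),
      ← Finset.range_eq_Ico]
    rw [Finset.sum_Ico_eq_sum_range]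
    simp
  rw [hsplit, offspringSum_range hn _ hm]
  rw [Finset.sum_sub_distrib, Finset.sum_const, Finset.card_range]
  rw [← Nat.cast_sum]
  rw [Finset.sum_congr rfl (fun j hj => hrw j (Finset.mem_range.mp hj))]
  push_cast
  ring

lemma good_iff (hn : 0 < n) (x : Fin n → ℕ) (hs : ∑ i, x i = n - 1) (k : Fin n) :
    ((∀ m, 1 ≤ m → m < n → m ≤ offspringSum (rot k x) m) ∧ offspringSum (rot k x) n = n - 1)
      ↔ ∀ m, 1 ≤ m → m < n → walk hn x (k : ℕ) ≤ walk hn x ((k : ℕ) + m) := by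
  have h2 : offspringSum (rot k x) n = n - 1 := by
    rw [offspringSum_univ, sum_rot hn, hs]
  constructor
  · rintro ⟨h, -⟩ m h1 hm
    have hle := h m h1 hm
    have hk := offspringSum_rot_cast hn x k (le_of_lt hm)
    have hc : (m : ℤ) ≤ (offspringSum (rot k x) m : ℤ) := by exact_mod_cast hle
    linarith
  · intro h
    refine ⟨fun m h1 hm => ?_, h2⟩
    have hw := h m h1 hm
    have hk := offspringSum_rot_cast hn x k (le_of_lt hm)
    have hc : (m : ℤ) ≤ (offspringSum (rot k x) m : ℤ) := by linarith
    exact_mod_cast hc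

lemma existsUnique_good (hn : 0 < n) (x : Fin n → ℕ) (hs : ∑ i, x i = n - 1) :
    ∃! k : Fin n, ((∀ m, 1 ≤ m → m < n → m ≤ offspringSum (rot k x) m) ∧
      offspringSum (rot k x) n = n - 1) := by
  obtain ⟨k, ⟨hkn, hg⟩, huni⟩ := cycle hn x hs
  refine ⟨⟨k, hkn⟩, (good_iff hn x hs ⟨k, hkn⟩).mpr hg, ?_⟩
  intro k' hk'
  exact Fin.ext (huni (k' : ℕ) ⟨k'.isLt, (good_iff hn x hs k').mp hk'⟩)

end OtterDwassAux

/-- **Otter–Dwass formula.** Let `T` be the total progeny of a Galton–Watson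
process started from one individual with offspring distribution `μ`.  Encoding the tree by
its breadth-first (Łukasiewicz) exploration by i.i.d. offspring variables `x_1, x_2, …ᵢ ~ μ`,
one has `T = n` iff `S_m = x_1 + ⋯ + x_m ≥ m` for all `1 ≤ m < n` and `S_n = n - 1`
(first passage of the walk to `n - 1`).  Then for every `n ≥ 1`,
`P(T = n) = (1/n) P(S_n = n − 1)`, where `S_n` is a sum of `n` i.i.d. variables with law `μ`. -/
theorem otter_dwass (μ : PMF ℕ) (n : ℕ) (hn : 1 ≤ n) :
    (∑' x : Fin n → ℕ,
        if ((∀ m, 1 ≤ m → m < n → m ≤ offspringSum x m) ∧ offspringSum x n = n - 1)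
        then ∏ i, μ (x i) else 0)
      = (1 / (n : ℝ≥0∞)) *
        ∑' x : Fin n → ℕ,
          if offspringSum x n = n - 1 then ∏ i, μ (x i) else 0 := by
  have hn0 : 0 < n := hn
  haveI : NeZero n := ⟨hn0.ne'⟩
  have key1 : ∀ x : Fin n → ℕ,
      (if offspringSum x n = n - 1 then ∏ i, μ (x i) else 0)
        = ∑ k : Fin n, (if ((∀ m, 1 ≤ m → m < n → m ≤ offspringSum (OtterDwassAux.rot k x) m) ∧
            offspringSum (OtterDwassAux.rot k x) n = n - 1) then ∏ i, μ (x i) else 0) := by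
    intro x
    by_cases hx : offspringSum x n = n - 1
    · have hs : ∑ i, x i = n - 1 := by rw [← OtterDwassAux.offspringSum_univ]; exact hx
      obtain ⟨k₀, hk₀, huni⟩ := OtterDwassAux.existsUnique_good hn0 x hs
      rw [if_pos hx, Finset.sum_eq_single k₀]
      · rw [if_pos hk₀]
      · intro k _ hne
        rw [if_neg]
        exact fun h => hne (huni k h)
      · intro h; exact absurd (Finset.mem_univ k₀) h
    · rw [if_neg hx]
      refine (Finset.sum_eq_zero ?_).symm
      intro k _
      rw [if_neg]
      rintro ⟨-, h2⟩
      apply hx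
      rw [OtterDwassAux.offspringSum_univ] at h2 ⊢
      rw [← OtterDwassAux.sum_rot hn0 k x]
      exact h2
  have key2 : ∀ k : Fin n,
      (∑' x : Fin n → ℕ, if ((∀ m, 1 ≤ m → m < n → m ≤ offspringSum (OtterDwassAux.rot k x) m) ∧
          offspringSum (OtterDwassAux.rot k x) n = n - 1) then ∏ i, μ (x i) else 0)
        = ∑' x : Fin n → ℕ, if ((∀ m, 1 ≤ m → m < n → m ≤ offspringSum x m) ∧
            offspringSum x n = n - 1) then ∏ i, μ (x i) else 0 := by
    intro k
    have hprod : ∀ x : Fin n → ℕ, ∏ i, μ (OtterDwassAux.rot k x i) = ∏ i, μ (x i) :=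
      fun x => Fintype.prod_equiv (Equiv.addRight k) _ _ (fun _ => rfl)
    let e : (Fin n → ℕ) ≃ (Fin n → ℕ) := Equiv.arrowCongr (Equiv.addRight k).symm (Equiv.refl ℕ)
    have hpt : ∀ x : Fin n → ℕ,
        (if ((∀ m, 1 ≤ m → m < n → m ≤ offspringSum (OtterDwassAux.rot k x) m) ∧
            offspringSum (OtterDwassAux.rot k x) n = n - 1) then ∏ i, μ (x i) else 0)
          = (fun y => if ((∀ m, 1 ≤ m → m < n → m ≤ offspringSum y m) ∧
              offspringSum y n = n - 1) then ∏ i, μ (y i) else 0) (e x) := by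
      intro x
      show (if ((∀ m, 1 ≤ m → m < n → m ≤ offspringSum (OtterDwassAux.rot k x) m) ∧
            offspringSum (OtterDwassAux.rot k x) n = n - 1) then ∏ i, μ (x i) else 0)
          = (if ((∀ m, 1 ≤ m → m < n → m ≤ offspringSum (OtterDwassAux.rot k x) m) ∧
              offspringSum (OtterDwassAux.rot k x) n = n - 1)
            then ∏ i, μ (OtterDwassAux.rot k x i) else 0)
      rw [hprod x]
    rw [tsum_congr hpt]
    exact Equiv.tsum_eq e (fun y => if ((∀ m, 1 ≤ m → m < n → m ≤ offspringSum y m) ∧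
      offspringSum y n = n - 1) then ∏ i, μ (y i) else 0)
  have main : (∑' x : Fin n → ℕ, if offspringSum x n = n - 1 then ∏ i, μ (x i) else 0)
      = (n : ℝ≥0∞) * ∑' x : Fin n → ℕ,
          if ((∀ m, 1 ≤ m → m < n → m ≤ offspringSum x m) ∧ offspringSum x n = n - 1)
          then ∏ i, μ (x i) else 0 := by
    rw [tsum_congr key1]
    rw [Summable.tsum_finsetSum (fun k _ => ENNReal.summable)]
    rw [Finset.sum_congr rfl (fun k _ => key2 k)]
    rw [Finset.sum_const, Finset.card_univ, Fintype.card_fin, nsmul_eq_mul]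
  rw [main, ← mul_assoc, one_div,
    ENNReal.inv_mul_cancel (Nat.cast_ne_zero.mpr hn0.ne') (ENNReal.natCast_ne_top n), one_mul]
end

section
/- Let p ∈ (0, 1/2) and let T̂ be the total progeny of a Galton–Watson process whose offspring distribution is the sum of two independent Bernoulli(p) random variables (i.e., Bin(2,p)). Then for every ε > 0 there exists c > 0 such that for all sufficiently large s, P(T̂ ≥ s) ≤ e^{−s(−log(4p(1−p)) − ε)}. -/
open Finset Classical

/-- The Bin(2,p) offspring probabilities: the number of offspring of each individual is the
sum of two independent Bernoulli(`p`) variables, so it takes values in `{0,1,2}`. -/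
noncomputable def bin2Weight (p : ℝ) (j : Fin 3) : ℝ :=
  (Nat.choose 2 j : ℝ) * p ^ (j : ℕ) * (1 - p) ^ (2 - (j : ℕ))

/-- Partial sum `S_m = x_0 + ⋯ + x_{m-1}` of the offspring numbers. -/
def offspringSum3 {n : ℕ} (x : Fin n → Fin 3) (m : ℕ) : ℕ :=
  ∑ i ∈ Finset.univ.filter (fun i : Fin n => (i : ℕ) < m), (x i : ℕ)

/-- Let `p ∈ (0, 1/2)` and let `T̂` be the total progeny of the
(subcritical) Galton–Watson process with Bin(2,p) offspring.  In the breadth-first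
(Łukasiewicz) encoding by i.i.d. offspring variables, `T̂ ≥ s` iff the walk satisfies
`S_m ≥ m` for all `1 ≤ m ≤ s - 1`, an event depending on the first `s - 1` variables only.
Then for every `ε > 0` and all sufficiently large `s`,
`P(T̂ ≥ s) ≤ e^{−s(−log(4p(1−p)) − ε)}`. -/
theorem subcritical_gw_tail (p : ℝ) (hp0 : 0 < p) (hp : p < 1 / 2) :
    ∀ ε > (0 : ℝ), ∃ s₀ : ℕ, ∀ s : ℕ, s₀ ≤ s →
      ∑ x ∈ (Finset.univ.filter (fun x : Fin (s - 1) → Fin 3 =>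
          ∀ m, 1 ≤ m → m ≤ s - 1 → m ≤ offspringSum3 x m)),
        ∏ i, bin2Weight p (x i)
      ≤ Real.exp (-(s : ℝ) * (-Real.log (4 * p * (1 - p)) - ε)) := by
  intro ε hε
  have hq0 : 0 < 1 - p := by linarith
  set q : ℝ := 1 - p with hq
  have hpq0 : 0 < 4 * p * q := by positivity
  have hpq1 : 4 * p * q < 1 := by nlinarith [sq_nonneg (1 - 2 * p)]
  set L : ℝ := -Real.log (4 * p * q) with hLdef
  have hL0 : 0 < L := by
    have h := Real.log_neg hpq0 hpq1
    rw [hLdef]; linarith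
  obtain ⟨N, hN⟩ := exists_nat_gt (L / ε)
  refine ⟨max 2 N, fun s hs => ?_⟩
  have hs2 : 2 ≤ s := le_trans (le_max_left _ _) hs
  have hsN : (L / ε) < (s : ℝ) :=
    lt_of_lt_of_le hN (by exact_mod_cast le_trans (le_max_right _ _) hs)
  set n := s - 1 with hndef
  have hn1 : 1 ≤ n := by omega
  set θ : ℝ := q / p with hθdef
  have hθ0 : 0 < θ := div_pos hq0 hp0
  have hθ1 : 1 ≤ θ := by
    rw [hθdef, le_div_iff₀ hp0, hq]; linarith
  have hw : ∀ j : Fin 3, 0 ≤ bin2Weight p j := by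
    intro j
    unfold bin2Weight
    have h1 : (0:ℝ) ≤ 1 - p := le_of_lt hq0
    positivity
  -- the single-variable exponential moment
  have hmoment : ∑ j : Fin 3, bin2Weight p j * θ ^ (j : ℕ) = 4 * q ^ 2 := by
    rw [Fin.sum_univ_three]
    simp only [bin2Weight]
    norm_num
    rw [hθdef, hq]
    field_simp
    ring
  -- Step 2 : the exponential estimate
  have step2 : (4 * p * q) ^ n ≤ Real.exp (-(s : ℝ) * (L - ε)) := by
    have hlog : Real.log (4 * p * q) = -L := by rw [hLdef]; ring
    have h4 : (4 * p * q) ^ n = Real.exp ((n : ℝ) * Real.log (4 * p * q)) := by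
      conv_lhs => rw [← Real.exp_log hpq0]
      rw [← Real.exp_nat_mul]
    rw [h4, Real.exp_le_exp, hlog]
    have hcast : (n : ℝ) = (s : ℝ) - 1 := by
      rw [hndef]
      have h1s : (1:ℕ) ≤ s := by omega
      push_cast [Nat.cast_sub h1s]
      ring
    have hLs : L < (s : ℝ) * ε := by
      rw [div_lt_iff₀ hε] at hsN
      linarith
    rw [hcast]
    nlinarith [hL0, hLs]
  have main : ∀ A : Finset (Fin n → Fin 3), (∀ x ∈ A, n ≤ ∑ i, ((x i : ℕ))) →
      ∑ x ∈ A, ∏ i, bin2Weight p (x i) ≤ (4 * p * q) ^ n := by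
    intro A hA
    have h1 : ∀ x ∈ A,
        ∏ i, bin2Weight p (x i)
          ≤ (∏ i, bin2Weight p (x i) * θ ^ ((x i : ℕ))) / θ ^ n := by
      intro x hx
      rw [le_div_iff₀ (pow_pos hθ0 n)]
      have hprodθ : ∏ i, θ ^ ((x i : ℕ)) = θ ^ (∑ i, ((x i : ℕ))) :=
        Finset.prod_pow_eq_pow_sum _ _ _
      calc (∏ i, bin2Weight p (x i)) * θ ^ n
          ≤ (∏ i, bin2Weight p (x i)) * θ ^ (∑ i, ((x i : ℕ))) := by
            apply mul_le_mul_of_nonneg_left (pow_le_pow_right₀ hθ1 (hA x hx))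
            exact Finset.prod_nonneg fun i _ => hw _
        _ = ∏ i, bin2Weight p (x i) * θ ^ ((x i : ℕ)) := by
            rw [← hprodθ, ← Finset.prod_mul_distrib]
    calc ∑ x ∈ A, ∏ i, bin2Weight p (x i)
        ≤ ∑ x ∈ A, (∏ i, bin2Weight p (x i) * θ ^ ((x i : ℕ))) / θ ^ n :=
          Finset.sum_le_sum h1
      _ ≤ ∑ x : Fin n → Fin 3,
            (∏ i, bin2Weight p (x i) * θ ^ ((x i : ℕ))) / θ ^ n := by
          apply Finset.sum_le_sum_of_subset_of_nonneg (Finset.subset_univ _)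
          intro x _ _
          apply div_nonneg _ (le_of_lt (pow_pos hθ0 n))
          exact Finset.prod_nonneg fun i _ => mul_nonneg (hw _) (le_of_lt (pow_pos hθ0 _))
      _ = (∑ j : Fin 3, bin2Weight p j * θ ^ ((j : ℕ))) ^ n / θ ^ n := by
          rw [← Finset.sum_div, Fintype.sum_pow]
      _ = (4 * q ^ 2) ^ n / θ ^ n := by rw [hmoment]
      _ = (4 * p * q) ^ n := by
          rw [← div_pow]
          congr 1
          rw [hθdef]
          field_simp
  refine le_trans (main _ ?_) step2
  intro x hx
  simp only [Finset.mem_filter] at hx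
  have := hx.2 n hn1 le_rfl
  have heq : offspringSum3 x n = ∑ i, ((x i : ℕ)) := by
    unfold offspringSum3
    congr 1
    apply Finset.filter_true_of_mem
    intro i _
    exact i.isLt
  omega
end
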